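/- Define sequences by d_0^- = d_0^+ = 1, d_n^- = 2 d_{n-1}^- d_{n-1}^+, d_n^+ = (d_{n-1}^-)² if n is odd and (d_{n-1}^-)² + (d_{n-1}^+)² if n is even, and d_n = d_n^- + d_n^+ if n is odd, d_n^- if n is even. Then d_1 = 3, d_2 = 4, d_3 = 56, and (log₂ d_n)/2^n converges to a finite positive limit as n → ∞ (extensive ground-state degeneracy). -/

import Mathlib

/-!
Write `x n = log₂ d_n^-`. Since `d_{n+1}^- = 2 d_n^- d_n^+` and `d_n^±` stay within a factor
`2^n` of each other, `x (n+1) - 2 x n = O(n)`, so the increments of `x n / 2^n` are summable and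
it converges. The limit is at least `1/2` because `d_{n+1}^- ≥ 2^{2^n}`, and `d_n` is within a
factor `2^{n+1}` of `d_n^-`, which is invisible after dividing the logarithm by `2^n`.
-/

/-- Degeneracies (d_n^-, d_n^+) of the lowest odd/even parity states of the uniform
anti-ferromagnetic hierarchical parity model. -/
def dpair : ℕ → ℕ × ℕ
  | 0 => (1, 1)
  | (n+1) =>
      (2 * (dpair n).1 * (dpair n).2,
       if (n+1) % 2 = 1 then (dpair n).1 ^ 2 else (dpair n).1 ^ 2 + (dpair n).2 ^ 2)

/-- Ground state degeneracy d_n. -/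
def dseq (n : ℕ) : ℕ := if n % 2 = 1 then (dpair n).1 + (dpair n).2 else (dpair n).1

open Filter Topology

theorem exists_tendsto_div_two_pow_of_abs_sub_two_mul_le {f c : ℕ → ℝ}
    (hc : Summable fun n => c n / 2 ^ n) (hf : ∀ n, |f (n + 1) - 2 * f n| ≤ c n) :
    ∃ L, Tendsto (fun n => f n / 2 ^ n) atTop (𝓝 L) := by
  have hdist (n : ℕ) : dist (f n / 2 ^ n) (f (n + 1) / 2 ^ (n + 1)) ≤ c n / 2 ^ n / 2 := by
    have h : f n / 2 ^ n - f (n + 1) / 2 ^ (n + 1) = -(f (n + 1) - 2 * f n) / 2 ^ n / 2 := by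
      field_simp; ring
    rw [Real.dist_eq, h, abs_div, abs_div, abs_neg, abs_of_pos (by positivity : (0 : ℝ) < 2 ^ n),
      abs_two]
    gcongr
    exact hf n
  exact cauchySeq_tendsto_of_complete <| cauchySeq_of_summable_dist <|
    (hc.div_const 2).of_nonneg_of_le (fun _ => dist_nonneg) hdist

theorem Filter.Tendsto.div_two_pow_of_abs_sub_le {f g c : ℕ → ℝ} {L : ℝ}
    (hf : Tendsto (fun n => f n / 2 ^ n) atTop (𝓝 L))
    (hc : Tendsto (fun n => c n / 2 ^ n) atTop (𝓝 0)) (hg : ∀ n, |g n - f n| ≤ c n) :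
    Tendsto (fun n => g n / 2 ^ n) atTop (𝓝 L) := by
  have herr : Tendsto (fun n => (g n - f n) / 2 ^ n) atTop (𝓝 0) := by
    refine squeeze_zero_norm (fun n => ?_) hc
    rw [Real.norm_eq_abs, abs_div, abs_of_pos (by positivity : (0 : ℝ) < 2 ^ n)]
    gcongr
    exact hg n
  simpa [sub_div] using hf.add herr

theorem summable_succ_div_two_pow : Summable fun n : ℕ => ((n : ℝ) + 1) / 2 ^ n := by
  have hgeom : Summable fun n : ℕ => (2⁻¹ : ℝ) ^ n :=
    summable_geometric_of_lt_one (by norm_num) (by norm_num)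
  have hmul : Summable fun n : ℕ => (n : ℝ) * (2⁻¹ : ℝ) ^ n := by
    simpa using summable_pow_mul_geometric_of_norm_lt_one (R := ℝ) 1 (r := 2⁻¹) (by norm_num)
  refine (hmul.add hgeom).congr fun n => ?_
  simp only [inv_pow]
  ring

theorem Real.abs_logb_sub_logb_le {b u v : ℝ} (hb : 1 < b) (hu : 0 < u) (hv : 0 < v) (k : ℕ)
    (huv : u ≤ b ^ k * v) (hvu : v ≤ b ^ k * u) : |Real.logb b u - Real.logb b v| ≤ k := by
  have hlog {s t : ℝ} (hs : 0 < s) (ht : 0 < t) (hst : s ≤ b ^ k * t) :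
      Real.logb b s ≤ k + Real.logb b t := by
    calc Real.logb b s ≤ Real.logb b (b ^ k * t) := Real.logb_le_logb_of_le hb hs hst
      _ = k + Real.logb b t := by
        rw [Real.logb_mul (by positivity) ht.ne', Real.logb_pow, Real.logb_self_eq_one hb, mul_one]
  rw [abs_sub_le_iff]
  constructor <;> linarith [hlog hu hv huv, hlog hv hu hvu]

lemma dpair_succ_fst (n : ℕ) : (dpair (n + 1)).1 = 2 * (dpair n).1 * (dpair n).2 := rfl

lemma dpair_succ_snd_le (n : ℕ) : (dpair (n + 1)).2 ≤ (dpair n).1 ^ 2 + (dpair n).2 ^ 2 := by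
  simp only [dpair]
  split_ifs <;> omega

lemma sq_dpair_fst_le_dpair_succ_snd (n : ℕ) : (dpair n).1 ^ 2 ≤ (dpair (n + 1)).2 := by
  simp only [dpair]
  split_ifs <;> omega

lemma dpair_pos (n : ℕ) : 0 < (dpair n).1 ∧ 0 < (dpair n).2 := by
  induction n with
  | zero => exact ⟨one_pos, one_pos⟩
  | succ n ih =>
    obtain ⟨ha, hb⟩ := ih
    rw [dpair_succ_fst]
    exact ⟨by positivity, (pow_pos ha 2).trans_le (sq_dpair_fst_le_dpair_succ_snd n)⟩

lemma dpair_le_two_pow_mul (n : ℕ) :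
    (dpair n).1 ≤ 2 ^ n * (dpair n).2 ∧ (dpair n).2 ≤ 2 ^ n * (dpair n).1 := by
  induction n with
  | zero => exact ⟨le_rfl, le_rfl⟩
  | succ n ih =>
    obtain ⟨hab, hba⟩ := ih
    set a := (dpair n).1
    set b := (dpair n).2
    have haa : a ^ 2 ≤ 2 ^ n * (a * b) := by nlinarith
    have hbb : b ^ 2 ≤ 2 ^ n * (a * b) := by nlinarith
    rw [dpair_succ_fst, pow_succ]
    constructor
    · calc 2 * a * b ≤ 2 ^ n * 2 * a ^ 2 := by nlinarith
        _ ≤ 2 ^ n * 2 * (dpair (n + 1)).2 := by gcongr; exact sq_dpair_fst_le_dpair_succ_snd n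
    · calc (dpair (n + 1)).2 ≤ a ^ 2 + b ^ 2 := dpair_succ_snd_le n
        _ ≤ 2 ^ n * 2 * (2 * a * b) := by nlinarith

lemma abs_logb_dpair_succ_sub_two_mul_le (n : ℕ) :
    |Real.logb 2 ((dpair (n + 1)).1 : ℝ) - 2 * Real.logb 2 ((dpair n).1 : ℝ)| ≤ n + 1 := by
  have ha := (dpair_pos n).1
  obtain ⟨hab, hba⟩ := dpair_le_two_pow_mul n
  have hup : (dpair (n + 1)).1 ≤ 2 ^ (n + 1) * (dpair n).1 ^ 2 := by
    rw [dpair_succ_fst, pow_succ 2 n]; nlinarith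
  have hlow : (dpair n).1 ^ 2 ≤ 2 ^ (n + 1) * (dpair (n + 1)).1 := by
    rw [dpair_succ_fst, pow_succ 2 n]; nlinarith
  have ha' : (0 : ℝ) < (dpair n).1 := by exact_mod_cast ha
  have hsucc : (0 : ℝ) < (dpair (n + 1)).1 := by exact_mod_cast (dpair_pos (n + 1)).1
  have h := Real.abs_logb_sub_logb_le one_lt_two hsucc (by positivity) (n + 1)
    (u := (dpair (n + 1)).1) (v := ((dpair n).1 : ℝ) ^ 2) (by exact_mod_cast hup)
    (by exact_mod_cast hlow)
  rwa [Real.logb_pow, Nat.cast_ofNat, Nat.cast_succ] at h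

lemma abs_logb_dseq_sub_logb_dpair_le (n : ℕ) :
    |Real.logb 2 (dseq n : ℝ) - Real.logb 2 ((dpair n).1 : ℝ)| ≤ n + 1 := by
  have ha := (dpair_pos n).1
  have hba := (dpair_le_two_pow_mul n).2
  have hlow : (dpair n).1 ≤ dseq n := by unfold dseq; split_ifs <;> omega
  have hup : dseq n ≤ 2 ^ (n + 1) * (dpair n).1 := by
    have : dseq n ≤ (dpair n).1 + (dpair n).2 := by unfold dseq; split_ifs <;> omega
    rw [pow_succ]; nlinarith [Nat.one_le_two_pow (n := n)]
  have h := Real.abs_logb_sub_logb_le one_lt_two (by exact_mod_cast ha.trans_le hlow)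
    (by exact_mod_cast ha) (n + 1) (u := dseq n) (v := (dpair n).1)
    (by exact_mod_cast hup)
    (by exact_mod_cast hlow.trans (Nat.le_mul_of_pos_left _ (by positivity)))
  rwa [Nat.cast_succ] at h

lemma two_pow_two_pow_le_dpair_succ (n : ℕ) :
    2 ^ 2 ^ n ≤ (dpair (n + 1)).1 ∧ 2 ^ 2 ^ n ≤ 2 * (dpair (n + 1)).2 := by
  induction n with
  | zero => decide
  | succ n ih =>
    have hsq : 2 ^ 2 ^ (n + 1) = 2 ^ 2 ^ n * 2 ^ 2 ^ n := by rw [← pow_add, pow_succ, mul_two]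
    constructor
    · rw [dpair_succ_fst, hsq, mul_assoc, mul_left_comm]
      exact Nat.mul_le_mul ih.1 ih.2
    · calc 2 ^ 2 ^ (n + 1) ≤ (dpair (n + 1)).1 ^ 2 := by rw [hsq, ← sq]; gcongr; exact ih.1
        _ ≤ (dpair (n + 2)).2 := sq_dpair_fst_le_dpair_succ_snd (n + 1)
        _ ≤ 2 * (dpair (n + 2)).2 := Nat.le_mul_of_pos_left _ two_pos

lemma half_le_logb_dpair_succ_div (n : ℕ) :
    1 / 2 ≤ Real.logb 2 ((dpair (n + 1)).1 : ℝ) / 2 ^ (n + 1) := by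
  have h : ((2 : ℕ) ^ 2 ^ n : ℝ) ≤ (dpair (n + 1)).1 := by
    exact_mod_cast (two_pow_two_pow_le_dpair_succ n).1
  have hlog := Real.logb_le_logb_of_le one_lt_two (by positivity) h
  rw [Nat.cast_ofNat, Real.logb_pow, Real.logb_self_eq_one one_lt_two, mul_one] at hlog
  rw [le_div_iff₀ (by positivity), pow_succ]
  push_cast at hlog
  linarith

/-- d_1 = 3, d_2 = 4, d_3 = 56, and (log₂ d_n)/2^n converges to a finite
positive limit (extensive ground-state degeneracy). -/
theorem degeneracy_recursion_extensive :
    dseq 1 = 3 ∧ dseq 2 = 4 ∧ dseq 3 = 56 ∧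
    ∃ L : ℝ, 0 < L ∧
      Filter.Tendsto (fun n : ℕ => Real.logb 2 (dseq n) / 2^n) Filter.atTop (nhds L) := by
  refine ⟨by decide, by decide, by decide, ?_⟩
  obtain ⟨L, hL⟩ := exists_tendsto_div_two_pow_of_abs_sub_two_mul_le
    (f := fun n => Real.logb 2 ((dpair n).1 : ℝ)) summable_succ_div_two_pow
    abs_logb_dpair_succ_sub_two_mul_le
  have hL_ge : 1 / 2 ≤ L :=
    ge_of_tendsto' ((tendsto_add_atTop_iff_nat 1).2 hL) half_le_logb_dpair_succ_div
  exact ⟨L, by linarith, hL.div_two_pow_of_abs_sub_le summable_succ_div_two_pow.tendsto_atTop_zero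
    abs_logb_dseq_sub_logb_dpair_le⟩
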